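/- arXiv:2408.08256 — 2 statements merged into one kernel-verified Lean document; each statement's English description precedes it below -/
import Mathlib

section
/- Let G = (V,E) be a graph and let ℋ = (L,H) be a correspondence cover of G. If G is k-locally-sparse, then H is k-locally-sparse. -/
open Finset

attribute [local instance] Classical.propDecidable

noncomputable section

/-- The number of ordered pairs of adjacent vertices inside `S`; this is exactly twice the
number of edges of the subgraph induced on `S`. -/
def pairsWithin {V : Type} [Fintype V] (G : SimpleGraph V) (S : Finset V) : ℕ :=
  ((S ×ˢ S).filter fun p => G.Adj p.1 p.2).card

/-- `G` is `k`-locally-sparse: each neighborhood induces at most `k` edges. -/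
def LocallySparse {V : Type} [Fintype V] (G : SimpleGraph V) (k : ℕ) : Prop :=
  ∀ v : V, pairsWithin G (G.neighborFinset v) ≤ 2 * k

/-- `(L, H)` is a correspondence cover of `G`. -/
structure IsCorrespondenceCover {V C : Type} (G : SimpleGraph V) (H : SimpleGraph C)
    (L : V → Finset C) : Prop where
  partition : ∀ c : C, ∃! v : V, c ∈ L v
  indep : ∀ v : V, ∀ c ∈ L v, ∀ c' ∈ L v, ¬H.Adj c c'
  matching : ∀ u v : V, ∀ c ∈ L u, ∀ c₁ ∈ L v, ∀ c₂ ∈ L v,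
    H.Adj c c₁ → H.Adj c c₂ → c₁ = c₂
  not_adj : ∀ u v : V, ¬G.Adj u v → ∀ c ∈ L u, ∀ c' ∈ L v, ¬H.Adj c c'

/-- If `G` is `k`-locally-sparse, then so is any cover graph `H` of a correspondence cover of
`G`. -/
theorem stmt7 (V C : Type) [Fintype V] [Fintype C] (G : SimpleGraph V) (H : SimpleGraph C)
    (L : V → Finset C) (hcov : IsCorrespondenceCover G H L) (k : ℕ)
    (hG : LocallySparse G k) : LocallySparse H k := by
  intro c
  obtain ⟨v, hv, hvuniq⟩ := hcov.partition c
  refine le_trans ?_ (hG v)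
  classical
  -- vertex function
  have vtxspec : ∀ d : C, d ∈ L (hcov.partition d).choose :=
    fun d => (hcov.partition d).choose_spec.1
  set vtx : C → V := fun d => (hcov.partition d).choose with hvtx
  have vtxuniq : ∀ (d : C) (u : V), d ∈ L u → u = vtx d :=
    fun d u hu => ((hcov.partition d).choose_spec.2 u hu)
  -- key adjacency transfer
  have adjG : ∀ d₁ d₂ : C, H.Adj d₁ d₂ → G.Adj (vtx d₁) (vtx d₂) := by
    intro d₁ d₂ hadj
    by_contra hnot
    exact hcov.not_adj _ _ hnot d₁ (vtxspec d₁) d₂ (vtxspec d₂) hadj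
  have hvc : v = vtx c := vtxuniq c v hv
  unfold pairsWithin
  apply Finset.card_le_card_of_injOn (fun p => (vtx p.1, vtx p.2))
  · intro p hp
    simp only [Finset.mem_coe, Finset.mem_filter, Finset.mem_product, SimpleGraph.mem_neighborFinset] at hp ⊢
    obtain ⟨⟨h1, h2⟩, h3⟩ := hp
    subst hvc
    exact ⟨⟨adjG _ _ h1, adjG _ _ h2⟩, adjG _ _ h3⟩
  · intro p hp q hq heq
    simp only [Finset.mem_coe, Finset.mem_filter, Finset.mem_product, SimpleGraph.mem_neighborFinset] at hp hq
    have h1 : vtx p.1 = vtx q.1 := congrArg Prod.fst heq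
    have h2 : vtx p.2 = vtx q.2 := congrArg Prod.snd heq
    have e1 : p.1 = q.1 := by
      apply hcov.matching v (vtx p.1) c hv p.1 (vtxspec p.1) q.1 (h1 ▸ vtxspec q.1) hp.1.1 hq.1.1
    have e2 : p.2 = q.2 := by
      apply hcov.matching v (vtx p.2) c hv p.2 (vtxspec p.2) q.2 (h2 ▸ vtxspec q.2) hp.1.2 hq.1.2
    exact Prod.ext e1 e2
end
end

section
/- Fix γ ∈ (0,1) and define γ' := γ·(1 + γ − 7ε/32)/(2γ − ε/4). There exists ε₀ > 0 (depending on γ) such that for every ε ∈ (0, ε₀] there is d# with the following property. Let d ≥ d# and 1 ≤ k ≤ d^{2γ}, define the sequences C := 4(1+γ), μ := ((C−ε)/2)·log(1 + ε/(8C)), η := μ/log(d/√k), ℓ₀ := C·d/log(d/√k), d₀ := d, keepᵢ := (1 − η/ℓᵢ)^{2dᵢ}, uncolorᵢ := (1 − η/ℓᵢ)^{keepᵢ·ℓᵢ/2}, ℓ_{i+1} := keepᵢ·ℓᵢ, d_{i+1} := keepᵢ·uncolorᵢ·dᵢ, β₀ := d₀^{−γ'(1−√γ')/200}, β_{i+1}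 := max{(1+36η)βᵢ, d_{i+1}^{−γ'(1−√γ')/200}}, and let i* be the minimal integer with d_{i*} ≤ ℓ_{i*}/100. Then for all integers i with 0 ≤ i < i*: (I1) dᵢ ≥ d^{ε/40}; (I2) k ≤ dᵢ^{2γ'}; (I3) 4η·dᵢ < ℓᵢ < 100·dᵢ; (I4) 1/log⁵(dᵢ) < η < 1/log(dᵢ/√k); (I5) βᵢ ≤ 1/10. -/
noncomputable section

private lemma ev_log_le (a b c : ℝ) (hb : 0 ≤ b) (hc : 0 < c) :
    ∀ᶠ u : ℝ in Filter.atTop, a + b * Real.log (25 * u) ≤ c * u := by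
  have hlog := Asymptotics.IsLittleO.def Real.isLittleO_log_id_atTop
    (show (0:ℝ) < c/(2*(b+1)) by positivity)
  filter_upwards [hlog, Filter.eventually_ge_atTop (1:ℝ),
    Filter.eventually_ge_atTop ((2/c) * (|a| + b*24))] with x hx h1 h2
  have hx0 : (0:ℝ) < x := lt_of_lt_of_le one_pos h1
  have hlx : Real.log x ≤ c/(2*(b+1)) * x := by
    simp only [Real.norm_eq_abs, id_eq] at hx
    calc Real.log x ≤ |Real.log x| := le_abs_self _
    _ ≤ c/(2*(b+1)) * |x| := hx
    _ = c/(2*(b+1)) * x := by rw [abs_of_pos hx0]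
  have hl25 : Real.log (25*x) = Real.log 25 + Real.log x :=
    Real.log_mul (by norm_num) (ne_of_gt hx0)
  have h25 : Real.log 25 ≤ 24 := by
    linarith [Real.log_le_sub_one_of_pos (by norm_num : (0:ℝ) < 25)]
  have hpiece1 : a + b * Real.log 25 ≤ c/2 * x := by
    have : (2/c) * (|a| + b*24) * (c/2) ≤ x * (c/2) :=
      mul_le_mul_of_nonneg_right h2 (by positivity)
    have h2c : (2/c) * (|a| + b*24) * (c/2) = |a| + b*24 := by field_simp
    nlinarith [le_abs_self a, mul_le_mul_of_nonneg_left h25 hb]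
  have hpiece2 : b * (c/(2*(b+1)) * x) ≤ c/2 * x := by
    have hb1 : 0 < b + 1 := by linarith
    rw [div_mul_eq_mul_div, mul_div_assoc']
    rw [div_le_iff₀ (by positivity)]
    nlinarith
  have := mul_le_mul_of_nonneg_left hlx hb
  nlinarith

private lemma keyalg (γ ε u L : ℝ) (hγ0 : 0 < γ) (hγ1 : γ < 1) (hε : 0 < ε)
    (hε2 : ε ≤ γ*(1-γ)/2) (hu : 0 < u) (hL1 : (1-γ)*u ≤ L) (hL2 : L ≤ u) :
    (u - L) + ε/80*u ≤ γ*(1+γ-7*ε/32)/(2*γ-ε/4) * (u - (4+2*ε/5)*(L/(4*(1+γ)))) := by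
  have hD : 0 < 2*γ - ε/4 := by nlinarith
  have hR : 0 < 4*(1+γ) := by nlinarith
  have hεγ : ε ≤ γ/2 := by nlinarith
  have hε8 : ε ≤ 1/8 := by nlinarith [sq_nonneg (γ - 1/2)]
  have hG' : 0 ≤ (2*γ-ε/4)*(4*(1+γ)) - γ*(1+γ-7*ε/32)*(4+2*ε/5) := by
    nlinarith [mul_nonneg hε.le hγ0.le, mul_nonneg (mul_nonneg hε.le hγ0.le) hγ0.le,
      mul_nonneg (mul_nonneg hε.le hε.le) hγ0.le, sq_nonneg γ]
  have hG0 : 0 ≤ γ*(1+γ-7*ε/32)*(8*γ - (2*ε/5)*(1-γ))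
      - (γ + ε/80)*(2*γ-ε/4)*(4*(1+γ)) := by
    nlinarith [mul_nonneg (mul_nonneg hγ0.le hε.le) (by nlinarith : (0:ℝ) ≤ (1-γ)*(9-8*γ)),
      mul_nonneg (mul_nonneg hε.le hε.le) (by nlinarith : (0:ℝ) ≤ 7*γ*(1-γ)/80 + (1+γ)/80),
      sq_nonneg ε, sq_nonneg (1-γ)]
  rw [div_mul_eq_mul_div (γ*(1+γ-7*ε/32)) (2*γ-ε/4), le_div_iff₀ hD]
  have key : ((u - L) + ε/80*u) * (2*γ-ε/4) * (4*(1+γ))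
      ≤ γ*(1+γ-7*ε/32) * (4*(1+γ)*u - (4+2*ε/5)*L) := by
    nlinarith [mul_nonneg (by linarith : 0 ≤ L - (1-γ)*u) hG', mul_nonneg hu.le hG0]
  have hexp : γ*(1+γ-7*ε/32) * (u - (4+2*ε/5)*(L/(4*(1+γ)))) * (4*(1+γ))
      = γ*(1+γ-7*ε/32) * (4*(1+γ)*u - (4+2*ε/5)*L) := by field_simp
  nlinarith [key, hexp]

private lemma prelim_mu (γ ε C : ℝ) (hγ0 : 0 < γ) (hγ1 : γ < 1) (hε : 0 < ε)
    (hε8 : ε ≤ 1/8) (hC : C = 4*(1+γ)) :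
    ε/100 ≤ (C-ε)/2 * Real.log (1+ε/(8*C)) ∧ (C-ε)/2 * Real.log (1+ε/(8*C)) ≤ ε/16 := by
  have hC4 : (4:ℝ) ≤ C := by rw [hC]; linarith
  have hC8 : C ≤ 8 := by rw [hC]; linarith
  have hz0 : (0:ℝ) < ε/(8*C) := by positivity
  have hz1 : ε/(8*C) ≤ 1 := by rw [div_le_one (by positivity)]; nlinarith
  have h1z : (0:ℝ) < 1 + ε/(8*C) := by linarith
  have hlogz_ub : Real.log (1 + ε/(8*C)) ≤ ε/(8*C) := by
    linarith [Real.log_le_sub_one_of_pos h1z]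
  have hlogz_lb : ε/(8*C)/2 ≤ Real.log (1 + ε/(8*C)) := by
    have h2 := Real.log_le_sub_one_of_pos (inv_pos.mpr h1z)
    rw [Real.log_inv] at h2
    have h3 : (1 + ε/(8*C))⁻¹ ≤ 1 - ε/(8*C)/2 := by
      rw [inv_eq_one_div, div_le_iff₀ h1z]
      nlinarith
    linarith
  have hlogz0 : 0 ≤ Real.log (1 + ε/(8*C)) := Real.log_nonneg (by linarith)
  constructor
  · have hzlb : ε/128 ≤ ε/(8*C)/2 := by
      rw [div_div]
      exact div_le_div_of_nonneg_left hε.le (by positivity) (by nlinarith)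
    have h6 := mul_le_mul_of_nonneg_left (hzlb.trans hlogz_lb)
      (show (0:ℝ) ≤ (C-ε)/2 by linarith)
    nlinarith [mul_le_mul_of_nonneg_right (show (31:ℝ)/8 ≤ C - ε by linarith)
      (by positivity : (0:ℝ) ≤ ε/128)]
  · have h4 : (C-ε)/2 * Real.log (1 + ε/(8*C)) ≤ C/2 * (ε/(8*C)) :=
      mul_le_mul (by linarith) hlogz_ub hlogz0 (by linarith)
    have h5 : C/2 * (ε/(8*C)) = ε/16 := by field_simp; ring
    linarith

private lemma prelim_gamma' (γ ε : ℝ) (hγ0 : 0 < γ) (hγ1 : γ < 1) (hε : 0 < ε)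
    (hεle : ε ≤ γ*(1-γ)/2) :
    0 < γ*(1+γ-7*ε/32)/(2*γ-ε/4) ∧ γ ≤ γ*(1+γ-7*ε/32)/(2*γ-ε/4) ∧
    γ*(1+γ-7*ε/32)/(2*γ-ε/4) < 1 ∧
    Real.sqrt (γ*(1+γ-7*ε/32)/(2*γ-ε/4)) ≤ 1 - 7*(1-γ)/32 := by
  have hεγ : ε ≤ γ := by nlinarith
  have hε8 : ε ≤ 1/8 := by nlinarith [sq_nonneg (γ - 1/2)]
  have hden : (0:ℝ) < 2*γ - ε/4 := by nlinarith
  have h0 : 0 < γ*(1+γ-7*ε/32)/(2*γ-ε/4) := div_pos (by nlinarith) hden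
  have hub : γ*(1+γ-7*ε/32)/(2*γ-ε/4) ≤ 1 - 7*(1-γ)/16 := by
    rw [div_le_iff₀ hden]
    nlinarith [mul_nonneg hε.le hγ0.le]
  refine ⟨h0, ?_, ?_, ?_⟩
  · rw [le_div_iff₀ hden]; nlinarith
  · rw [div_lt_one hden]; nlinarith
  · have h10 : γ*(1+γ-7*ε/32)/(2*γ-ε/4) ≤ (1 - 7*(1-γ)/32)^2 := by nlinarith
    calc Real.sqrt (γ*(1+γ-7*ε/32)/(2*γ-ε/4))
        ≤ Real.sqrt ((1 - 7*(1-γ)/32)^2) := Real.sqrt_le_sqrt h10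
    _ = 1 - 7*(1-γ)/32 := Real.sqrt_sq (by nlinarith)


private lemma step_gain (ε η x r Kv Uv : ℝ) (hε : 0 < ε) (hε8 : ε ≤ 1/8)
    (hη0 : 0 < η) (hηub : η ≤ ε/1000) (hx_pos : 0 < x) (hx_ub : x ≤ ε/1000)
    (hr : 0 < r) (hKlb : 1-ε/16 ≤ Kv) (hKub : Kv ≤ 1)
    (hUinv : Uv ≤ (1 + η*Kv/2)⁻¹) :
    2*(η*r)*(1+2*x) ≤ (4+2*ε/5)*(r - Uv*r) := by
  have hKpos : 0 < Kv := by nlinarith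
  have hZ : (0:ℝ) < 1 + η*Kv/2 := by positivity
  have hUlb2 : (η*Kv/2) * (1 - η*Kv/2) ≤ 1 - Uv := by
    have h13 : (1 + η*Kv/2)⁻¹ ≤ 1 - (η*Kv/2)*(1 - η*Kv/2) := by
      rw [inv_eq_one_div, div_le_iff₀ hZ]
      nlinarith [mul_nonneg (mul_nonneg hη0.le hKpos.le)
        (mul_nonneg (mul_nonneg hη0.le hKpos.le) (mul_nonneg hη0.le hKpos.le))]
    linarith [hUinv.trans h13]
  have hz_ub : η*Kv/2 ≤ η/2 := by nlinarith
  have hz_lb : η*(1-ε/16)/2 ≤ η*Kv/2 := by nlinarith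
  have hz0 : (0:ℝ) ≤ η*Kv/2 := by positivity
  have hzz : η*(1-ε/16)/2 - (η/2)^2 ≤ (η*Kv/2)*(1 - η*Kv/2) := by
    nlinarith [mul_self_le_mul_self hz0 hz_ub]
  have hbr : 2*(1+2*x) + (4+2*ε/5)*(η/4) ≤ (4+2*ε/5)*((1-ε/16)/2) := by
    nlinarith [mul_le_mul_of_nonneg_left hηub hε.le, mul_le_mul_of_nonneg_left hε8 hε.le]
  have hfact : 2*η*(1+2*x) ≤ (4+2*ε/5) * ((η*Kv/2) * (1 - η*Kv/2)) := by
    nlinarith [mul_le_mul_of_nonneg_left hbr hη0.le,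
      mul_le_mul_of_nonneg_left hzz (show (0:ℝ) ≤ 4+2*ε/5 by linarith)]
  nlinarith [mul_le_mul_of_nonneg_right
    (mul_le_mul_of_nonneg_left hUlb2 (show (0:ℝ) ≤ 4+2*ε/5 by linarith)) hr.le,
    mul_le_mul_of_nonneg_right hfact hr.le]

set_option maxHeartbeats 1000000 in
private lemma step_core (ε η li di Kv Uv : ℝ)
    (hKv : Kv = (1 - η/li) ^ (2*di)) (hUv : Uv = (1 - η/li) ^ (Kv * li / 2))
    (hε : 0 < ε) (hε8 : ε ≤ 1/8) (hη0 : 0 < η) (hηub : η ≤ ε/1000)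
    (hli : 0 < li) (hdi : (16384:ℝ) ≤ di) (hηr : η * (di/li) ≤ ε/64) :
    0 < Kv ∧ Kv ≤ 1 ∧ 0 < Uv ∧ Uv ≤ 1 ∧ Uv ≤ Real.exp (-(η/4)) ∧
    -((4+2*ε/5)*(di/li - Uv*(di/li))) - η ≤ Real.log Kv + Real.log Uv := by
  set x := η/li with hxd
  have hdi0 : 0 < di := by linarith
  have hr_pos : 0 < di/li := div_pos hdi0 hli
  have hx_pos : 0 < x := div_pos hη0 hli
  have hx_dd : x * di = η * (di/li) := by rw [hxd]; field_simp
  have hx_l : x * li = η := by rw [hxd]; field_simp [ne_of_gt hli]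
  have hx_ub : x ≤ ε/1000 := by
    nlinarith [mul_le_mul_of_nonneg_left hdi hx_pos.le]
  have hx_half : x ≤ 1/2 := by nlinarith
  have h1x : 0 < 1 - x := by nlinarith
  have hlog_ub : Real.log (1-x) ≤ -x := by
    nlinarith [Real.log_le_sub_one_of_pos h1x]
  have hlog_lb : -(x*(1+2*x)) ≤ Real.log (1-x) := by
    have h2 := Real.log_le_sub_one_of_pos (inv_pos.mpr h1x)
    rw [Real.log_inv] at h2
    have h3 : (1-x)⁻¹ ≤ 1 + x*(1+2*x) := by
      rw [inv_eq_one_div, div_le_iff₀ h1x]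
      nlinarith [mul_nonneg (mul_nonneg hx_pos.le hx_pos.le) (by linarith : (0:ℝ) ≤ 1-2*x)]
    linarith
  have hKv_exp : Kv = Real.exp (Real.log (1-x) * (2*di)) := by
    rw [hKv]; exact Real.rpow_def_of_pos h1x _
  have hKv_pos : 0 < Kv := by rw [hKv_exp]; exact Real.exp_pos _
  have hKv_le1 : Kv ≤ 1 := by
    rw [hKv_exp]
    apply Real.exp_le_one_iff.mpr
    nlinarith
  have hKv_lb : 1 - ε/16 ≤ Kv := by
    rw [hKv_exp]
    have h8 : (x*di)*(1+2*x) ≤ (ε/64)*2 := by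
      rw [hx_dd]
      apply mul_le_mul hηr (by linarith) (by linarith) (by linarith)
    have ha : -(ε/16) ≤ Real.log (1-x) * (2*di) := by
      nlinarith [mul_le_mul_of_nonneg_right hlog_lb (by linarith : (0:ℝ) ≤ 2*di)]
    calc 1 - ε/16 ≤ Real.exp (-(ε/16)) := by nlinarith [Real.add_one_le_exp (-(ε/16))]
    _ ≤ _ := Real.exp_le_exp.mpr ha
  have hKl2 : (0:ℝ) ≤ Kv * li / 2 := by positivity
  have hUv_exp : Uv = Real.exp (Real.log (1-x) * (Kv * li / 2)) := by
    rw [hUv]; exact Real.rpow_def_of_pos h1x _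
  have hUv_pos : 0 < Uv := by rw [hUv_exp]; exact Real.exp_pos _
  have hUv_ub : Uv ≤ Real.exp (-(η * Kv / 2)) := by
    rw [hUv_exp]
    apply Real.exp_le_exp.mpr
    have h5 : (-x)*(Kv * li / 2) = -(η * Kv / 2) := by rw [← hx_l]; ring
    nlinarith [mul_le_mul_of_nonneg_right hlog_ub hKl2]
  have hUv_le1 : Uv ≤ 1 := le_trans hUv_ub (Real.exp_le_one_iff.mpr (by nlinarith))
  have hUv_q : Uv ≤ Real.exp (-(η/4)) := by
    apply le_trans hUv_ub (Real.exp_le_exp.mpr ?_)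
    nlinarith
  have hlogKv : -(2*(η*(di/li))*(1+2*x)) ≤ Real.log Kv := by
    rw [hKv_exp, Real.log_exp]
    have h8 : (-(x*(1+2*x)))*(2*di) = -(2*(η*(di/li))*(1+2*x)) := by rw [← hx_dd]; ring
    nlinarith [mul_le_mul_of_nonneg_right hlog_lb (by linarith : (0:ℝ) ≤ 2*di)]
  have hlogUv : -η ≤ Real.log Uv := by
    rw [hUv_exp, Real.log_exp]
    have h8 : (-(x*(1+2*x)))*(Kv * li / 2) = -(η*((1+2*x)*Kv)/2) := by rw [← hx_l]; ring
    have h9 : (1+2*x)*Kv ≤ 2 := by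
      nlinarith [mul_le_mul_of_nonneg_left hKv_le1 (by linarith : (0:ℝ) ≤ 1+2*x)]
    nlinarith [mul_le_mul_of_nonneg_right hlog_lb hKl2,
      mul_le_mul_of_nonneg_left h9 (by linarith : (0:ℝ) ≤ η/2)]
  -- the gain inequality
  have hZ : (0:ℝ) < 1 + η*Kv/2 := by positivity
  have hUinv : Uv ≤ (1 + η*Kv/2)⁻¹ := by
    have h10 := Real.add_one_le_exp (η*Kv/2)
    have h11 : Real.exp (-(η*Kv/2)) = (Real.exp (η*Kv/2))⁻¹ := Real.exp_neg _
    exact le_trans (hUv_ub.trans_eq h11) (inv_anti₀ hZ (by linarith))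
  have hgain := step_gain ε η x (di/li) Kv Uv hε hε8 hη0 hηub hx_pos hx_ub hr_pos hKv_lb hKv_le1 hUinv
  exact ⟨hKv_pos, hKv_le1, hUv_pos, hUv_le1, hUv_q, by linarith⟩

private lemma i1_mid (γ ε u L lg : ℝ) (hγ0 : 0 < γ) (hγ1 : γ < 1) (hε : 0 < ε)
    (hεγ : ε ≤ γ) (hu1 : 1 ≤ u) (hLu : L ≤ u)
    (hc4 : 1 + 4*Real.log (25*u) ≤ γ/4*u)
    (h1 : u - (4+2*ε/5)*(L/(4*(1+γ))) - 4*Real.log (25*u) ≤ lg) :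
    ε/40*u ≤ lg := by
  have hC0 : (0:ℝ) < 4*(1+γ) := by linarith
  have h2 : (4+2*ε/5)*(L/(4*(1+γ))) ≤ (1 - 3*γ/8)*u := by
    have h3 : L/(4*(1+γ)) ≤ u/(4*(1+γ)) := (div_le_div_iff_of_pos_right hC0).mpr hLu
    have h4 : (4+2*ε/5)*(u/(4*(1+γ))) ≤ (1-3*γ/8)*u := by
      rw [mul_div_assoc', div_le_iff₀ hC0]
      nlinarith [mul_le_mul_of_nonneg_right
        (show 4+2*ε/5 ≤ (1-3*γ/8)*(4*(1+γ)) by nlinarith)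
        (show (0:ℝ) ≤ u by linarith)]
    calc (4+2*ε/5)*(L/(4*(1+γ))) ≤ (4+2*ε/5)*(u/(4*(1+γ))) :=
      mul_le_mul_of_nonneg_left h3 (by linarith)
    _ ≤ (1-3*γ/8)*u := h4
  nlinarith [mul_nonneg (show (0:ℝ) ≤ γ/8 - ε/40 by linarith)
    (show (0:ℝ) ≤ u by linarith)]

private lemma i4_low (ε u lg η : ℝ) (hε : 0 < ε) (hε8 : ε ≤ 1/8) (hu1 : 1 ≤ u)
    (hc6 : 1000/ε^2 ≤ u) (hlg : ε/40*u ≤ lg) (hηlb : ε/100/u ≤ η) :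
    1/lg^5 < η := by
  have hu0 : (0:ℝ) < u := by linarith
  have hlg0 : 0 < lg := lt_of_lt_of_le (by positivity) hlg
  have h29 : (1000:ℝ) ≤ ε^2*u := by
    have h := (div_le_iff₀ (by positivity : (0:ℝ) < ε^2)).mp hc6
    nlinarith
  have h30 : (1000:ℝ)^4 ≤ (ε^2*u)^4 := pow_le_pow_left₀ (by norm_num) h29 4
  have h5 : ((ε/40)*u)^5 ≤ lg^5 := pow_le_pow_left₀ (by positivity) hlg 5
  have h27 : (ε/100/u) * (((ε/40)*u)^5) ≤ η * lg^5 :=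
    mul_le_mul hηlb h5 (by positivity) (le_trans (by positivity) hηlb)
  have h28 : (ε/100/u) * (((ε/40)*u)^5) = ε^6*u^4/10240000000 := by
    field_simp; ring
  have h31 : (ε^2*u)^4 = ε^8*u^4 := by ring
  have h32 : ε^8*u^4 ≤ ε^6*u^4 := by
    nlinarith [mul_nonneg (mul_nonneg (pow_nonneg hε.le 6) (pow_nonneg hu0.le 4))
      (show (0:ℝ) ≤ 1 - ε^2 by nlinarith)]
  rw [div_lt_iff₀ (by positivity : (0:ℝ) < lg^5)]
  linarith

private lemma i5_final (i : ℕ) (η u c E B : ℝ) (hη0 : 0 ≤ η) (hu1 : 1 ≤ u) (hc : 0 < c)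
    (hηi : η * i ≤ 4 * Real.log (25*u)) (hE : E ≤ -c)
    (hc7 : 4 + 144*Real.log (25*u) ≤ c*u)
    (hB : B ≤ (1+36*η)^i * Real.exp (E*u)) : B ≤ 1/10 := by
  have h2exp : (2:ℝ) ≤ Real.exp 1 := by linarith [Real.add_one_le_exp 1]
  have hlog25 : 0 ≤ Real.log (25*u) := Real.log_nonneg (by nlinarith)
  have h36 : (1+36*η)^i ≤ Real.exp (↑i * (36*η)) := by
    calc (1+36*η)^i ≤ (Real.exp (36*η))^i :=
      pow_le_pow_left₀ (by linarith) (by linarith [Real.add_one_le_exp (36*η)]) i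
    _ = Real.exp (↑i * (36*η)) := (Real.exp_nat_mul _ i).symm
  have h37 : (↑i:ℝ) * (36*η) ≤ 144 * Real.log (25*u) := by
    have hcm : (↑i:ℝ)*(36*η) = 36*(η*↑i) := by ring
    linarith
  have hEu : E*u ≤ -c*u := mul_le_mul_of_nonneg_right hE (by linarith)
  have hcu : -c*u ≤ -(c*u) := by linarith [le_of_eq (neg_mul c u)]
  have hlog10 : Real.log (1/10) ≥ -4 := by
    rw [one_div, Real.log_inv]
    have h10 : (10:ℝ) ≤ Real.exp 4 := by
      calc (10:ℝ) ≤ 2^(4:ℕ) := by norm_num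
      _ ≤ (Real.exp 1)^(4:ℕ) := pow_le_pow_left₀ (by norm_num) h2exp 4
      _ = Real.exp ((4:ℕ)*1) := (Real.exp_nat_mul 1 4).symm
      _ = Real.exp 4 := by norm_num
    have h11 := (Real.log_le_iff_le_exp (by norm_num : (0:ℝ) < 10)).mpr h10
    linarith
  calc B ≤ (1+36*η)^i * Real.exp (E*u) := hB
  _ ≤ Real.exp (↑i*(36*η)) * Real.exp (E*u) :=
      mul_le_mul_of_nonneg_right h36 (Real.exp_pos _).le
  _ = Real.exp (↑i*(36*η) + E*u) := (Real.exp_add _ _).symm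
  _ ≤ Real.exp (Real.log (1/10)) := Real.exp_le_exp.mpr (by linarith)
  _ = 1/10 := Real.exp_log (by norm_num)

/-- One step of the recursion: given `(ℓᵢ, dᵢ, βᵢ)`, produce `(ℓᵢ₊₁, dᵢ₊₁, βᵢ₊₁)` using
`keepᵢ = (1 - η/ℓᵢ)^{2dᵢ}`, `uncolorᵢ = (1 - η/ℓᵢ)^{keepᵢ·ℓᵢ/2}` (real powers), and
`βᵢ₊₁ = max ((1+36η)βᵢ) (dᵢ₊₁^e)` where `e = -γ'(1-√γ')/200`. -/
def seqStep3 (η e : ℝ) (p : ℝ × ℝ × ℝ) : ℝ × ℝ × ℝ :=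
  let keep : ℝ := (1 - η / p.1) ^ (2 * p.2.1)
  let uncolor : ℝ := (1 - η / p.1) ^ (keep * p.1 / 2)
  let d' : ℝ := keep * uncolor * p.2.1
  (keep * p.1, d', max ((1 + 36 * η) * p.2.2) (d' ^ e))

/-- The sequences `(ℓᵢ, dᵢ, βᵢ)` with initial values `(ℓ₀, d₀, d₀^e)`. -/
def seqs3 (η e ℓ0 d0 : ℝ) : ℕ → ℝ × ℝ × ℝ
  | 0 => (ℓ0, d0, d0 ^ e)
  | i + 1 => seqStep3 η e (seqs3 η e ℓ0 d0 i)

set_option maxHeartbeats 1000000 in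
/-- Properties (I1)–(I5) of the recursion, valid for all indices `i` below the minimal index
`i*` with `d_{i*} ≤ ℓ_{i*}/100`. -/
theorem stmt17 (γ : ℝ) (hγ : γ ∈ Set.Ioo (0 : ℝ) 1) :
    ∃ ε₀ : ℝ, 0 < ε₀ ∧ ∀ ε : ℝ, 0 < ε → ε ≤ ε₀ →
    ∃ dsharp : ℝ, ∀ d k : ℝ, dsharp ≤ d → 1 ≤ k → k ≤ d ^ (2 * γ) →
      (let γ' : ℝ := γ * (1 + γ - 7 * ε / 32) / (2 * γ - ε / 4);
       let e : ℝ := -(γ' * (1 - Real.sqrt γ')) / 200;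
       let C : ℝ := 4 * (1 + γ);
       let μ : ℝ := (C - ε) / 2 * Real.log (1 + ε / (8 * C));
       let η : ℝ := μ / Real.log (d / Real.sqrt k);
       let ℓ : ℕ → ℝ := fun i => (seqs3 η e (C * d / Real.log (d / Real.sqrt k)) d i).1;
       let dd : ℕ → ℝ := fun i => (seqs3 η e (C * d / Real.log (d / Real.sqrt k)) d i).2.1;
       let β : ℕ → ℝ := fun i => (seqs3 η e (C * d / Real.log (d / Real.sqrt k)) d i).2.2;
       ∀ istar : ℕ,
         dd istar ≤ ℓ istar / 100 →
         (∀ j : ℕ, j < istar → ¬dd j ≤ ℓ j / 100) →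
         ∀ i : ℕ, i < istar →
           d ^ (ε / 40) ≤ dd i ∧
           k ≤ dd i ^ (2 * γ') ∧
           (4 * η * dd i < ℓ i ∧ ℓ i < 100 * dd i) ∧
           (1 / (Real.log (dd i)) ^ 5 < η ∧ η < 1 / Real.log (dd i / Real.sqrt k)) ∧
           β i ≤ 1 / 10) := by
  obtain ⟨hγ0, hγ1⟩ := hγ
  have hε₀pos : (0:ℝ) < γ*(1-γ)/2 := by
    have h1 : (0:ℝ) < 1 - γ := by linarith
    positivity
  refine ⟨γ*(1-γ)/2, hε₀pos, ?_⟩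
  intro ε hε hεle
  have hεγ : ε ≤ γ := by nlinarith only [hεle, hγ0, hγ1, hε]
  have hε8 : ε ≤ 1/8 := by nlinarith only [hεle, hγ0, hγ1, hε, sq_nonneg (γ - 1/2)]
  have c2pos : (0:ℝ) < 7*γ*(1-γ)/6400 * (ε/40) := by
    have h1 : (0:ℝ) < 1 - γ := by linarith
    positivity
  have E1 := Filter.eventually_ge_atTop (3:ℝ)
  have E2 := Real.tendsto_log_atTop.eventually_ge_atTop (63/(1-γ))
  have E3 := Real.tendsto_log_atTop.eventually (ev_log_le 14 0 (ε/40) le_rfl (by positivity))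
  have E4 := Real.tendsto_log_atTop.eventually (ev_log_le 1 4 (γ/4) (by norm_num) (by positivity))
  have E5 := Real.tendsto_log_atTop.eventually (ev_log_le 0 4 (ε/80) (by norm_num) (by positivity))
  have E6 := Real.tendsto_log_atTop.eventually_ge_atTop (1000/ε^2)
  have E7 := Real.tendsto_log_atTop.eventually
    (ev_log_le 4 144 (7*γ*(1-γ)/6400 * (ε/40)) (by norm_num) c2pos)
  obtain ⟨a, ha⟩ := Filter.eventually_atTop.mp
    ((((((E1.and E2).and E3).and E4).and E5).and E6).and E7)
  clear E1 E2 E3 E4 E5 E6 E7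
  refine ⟨a, ?_⟩
  intro d k hda hk1 hkd
  obtain ⟨⟨⟨⟨⟨⟨hd3, hc2⟩, hc3⟩, hc4⟩, hc5⟩, hc6⟩, hc7⟩ := ha d hda
  clear ha hda
  simp only [zero_mul, add_zero, zero_add] at hc3 hc5
  intro γ' e C μ η ℓ dd β
  have hγ'def : γ' = γ * (1 + γ - 7 * ε / 32) / (2 * γ - ε / 4) := rfl
  have hedef : e = -(γ' * (1 - Real.sqrt γ')) / 200 := rfl
  have hCdef : C = 4 * (1 + γ) := rfl
  have hμdef : μ = (C - ε) / 2 * Real.log (1 + ε / (8 * C)) := rfl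
  have hηdef : η = μ / Real.log (d / Real.sqrt k) := rfl
  have hl0 : ℓ 0 = C * d / Real.log (d / Real.sqrt k) := rfl
  have hdd0 : dd 0 = d := rfl
  have hb0 : β 0 = d ^ e := rfl
  have hstepl : ∀ i, ℓ (i+1) = (1 - η/ℓ i)^(2*dd i) * ℓ i := fun _ => rfl
  have hstepd : ∀ i, dd (i+1) = (1 - η/ℓ i)^(2*dd i) *
      ((1 - η/ℓ i)^((1 - η/ℓ i)^(2*dd i) * ℓ i / 2)) * dd i := fun _ => rfl
  have hstepb : ∀ i, β (i+1) = max ((1+36*η) * β i) (dd (i+1) ^ e) := fun _ => rfl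
  clear_value γ' e C μ η ℓ dd β
  set u := Real.log d with hu
  set L := Real.log (d / Real.sqrt k) with hL
  -- basic facts about d, k, L
  have hd0 : (0:ℝ) < d := by linarith
  have hd1 : (1:ℝ) < d := by linarith
  have hu1 : (1:ℝ) ≤ u := by
    rw [hu, Real.le_log_iff_exp_le hd0]
    linarith [Real.exp_one_lt_d9]
  have hk0 : (0:ℝ) < k := by linarith
  have hsk1 : (1:ℝ) ≤ Real.sqrt k := by
    rw [show (1:ℝ) = Real.sqrt 1 by simp]
    exact Real.sqrt_le_sqrt hk1
  have hsk0 : (0:ℝ) < Real.sqrt k := lt_of_lt_of_le one_pos hsk1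
  have hskd : Real.sqrt k ≤ d ^ γ := by
    rw [Real.sqrt_eq_rpow]
    calc k ^ (1/2:ℝ) ≤ (d ^ (2*γ)) ^ (1/2:ℝ) :=
      Real.rpow_le_rpow (by linarith) hkd (by norm_num)
    _ = d ^ γ := by rw [← Real.rpow_mul hd0.le]; congr 1; ring
  have hlogsk0 : 0 ≤ Real.log (Real.sqrt k) := Real.log_nonneg hsk1
  have hlogsku : Real.log (Real.sqrt k) ≤ γ * u := by
    rw [hu]
    calc Real.log (Real.sqrt k) ≤ Real.log (d ^ γ) := Real.log_le_log hsk0 hskd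
    _ = γ * Real.log d := Real.log_rpow hd0 γ
  have hLsplit : L = u - Real.log (Real.sqrt k) := by
    rw [hL, hu]
    exact Real.log_div (ne_of_gt hd0) (ne_of_gt hsk0)
  have hLu : L ≤ u := by linarith only [hLsplit, hlogsk0]
  have hLlb : (1-γ)*u ≤ L := by linarith only [hLsplit, hlogsku]
  have hLpos : 0 < L := by nlinarith only [hLlb, hu1, hγ1, hγ0]
  have hL63 : (63:ℝ) ≤ L := by
    have h := (div_le_iff₀ (by linarith : (0:ℝ) < 1 - γ)).mp hc2
    nlinarith only [h, hLlb]
  have hC4 : (4:ℝ) ≤ C := by rw [hCdef]; linarith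
  have hC8 : C ≤ 8 := by rw [hCdef]; linarith
  have hC0 : (0:ℝ) < C := by linarith
  obtain ⟨hμlb, hμub⟩ := prelim_mu γ ε C hγ0 hγ1 hε hε8 hCdef
  rw [← hμdef] at hμlb hμub
  have hμ0 : (0:ℝ) < μ := by linarith only [hμlb, hε]
  have hμ1 : μ < 1 := by linarith only [hμub, hε8]
  have hη0 : (0:ℝ) < η := by rw [hηdef]; exact div_pos hμ0 hLpos
  have hηub : η ≤ ε/1000 := by
    rw [hηdef]
    have h7 : μ/L ≤ (ε/16)/63 := div_le_div₀ (by positivity) hμub (by norm_num) hL63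
    linarith only [h7, hε]
  have hη1 : η ≤ 1 := le_trans hηub (by linarith only [hε8])
  have hηL : η * L = μ := by rw [hηdef]; field_simp
  have hr0eq : dd 0 / ℓ 0 = L / C := by
    rw [hdd0, hl0]
    field_simp
  have hμC : μ/C ≤ ε/64 := by
    have h8 : μ/C ≤ (ε/16)/4 := div_le_div₀ (by positivity) hμub (by norm_num) hC4
    linarith only [h8]
  have hηLC : η * (L/C) = μ/C := by rw [← hηL]; field_simp
  have h2exp : (2:ℝ) ≤ Real.exp 1 := by linarith [Real.add_one_le_exp 1]
  have hD016384 : (16384:ℝ) ≤ d ^ (ε/40) := by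
    have h9 : d ^ (ε/40) = Real.exp (Real.log d * (ε/40)) := Real.rpow_def_of_pos hd0 _
    rw [h9, ← hu]
    calc (16384:ℝ) = 2^(14:ℕ) := by norm_num
    _ ≤ (Real.exp 1)^(14:ℕ) := pow_le_pow_left₀ (by norm_num) h2exp 14
    _ = Real.exp ((14:ℕ) * 1) := (Real.exp_nat_mul 1 14).symm
    _ ≤ Real.exp (u * (ε/40)) := by
        apply Real.exp_le_exp.mpr
        push_cast
        linarith only [hc3]
  obtain ⟨hγ'0, hγ'γ, hγ'1, hsqγ'⟩ := prelim_gamma' γ ε hγ0 hγ1 hε hεle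
  rw [← hγ'def] at hγ'0 hγ'γ hγ'1 hsqγ'
  have he_ub : e ≤ -(7*γ*(1-γ)/6400) := by
    rw [hedef]
    have h11 : γ * (7*(1-γ)/32) ≤ γ' * (1 - Real.sqrt γ') :=
      mul_le_mul hγ'γ (by linarith only [hsqγ']) (by nlinarith only [hγ1, hγ0]) hγ'0.le
    linarith only [h11]
  have he_neg : e < 0 :=
    lt_of_le_of_lt he_ub (by nlinarith only [hγ0, hγ1])
  intro istar hstop hmin
  -- helper: bound on η * i from minimality
  have hEta : ∀ j : ℕ, j < istar → 0 < ℓ j →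
      dd j / ℓ j ≤ L / C * Real.exp (-(↑j * η / 4)) → η * ↑j ≤ 4 * Real.log (25*u) := by
    intro j hj hlj hr
    have h100 : ℓ j / 100 < dd j := not_le.mp (hmin j hj)
    have hrlb : 1/100 < dd j / ℓ j := by
      rw [lt_div_iff₀ hlj]
      linarith only [h100, hlj]
    have hepos : 0 < Real.exp (↑j*η/4) := Real.exp_pos _
    have hLC4 : L/C ≤ u/4 := div_le_div₀ (by linarith only [hu1]) hLu (by norm_num) hC4
    have h2 : Real.exp (↑j*η/4) ≤ 25*u := by
      rw [Real.exp_neg] at hr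
      have h3 : (1:ℝ)/100 < L/C * (Real.exp (↑j*η/4))⁻¹ := lt_of_lt_of_le hrlb hr
      have h4 := mul_lt_mul_of_pos_right h3 hepos
      have h5 : L/C * (Real.exp (↑j*η/4))⁻¹ * Real.exp (↑j*η/4) = L/C := by
        field_simp
      rw [h5] at h4
      nlinarith only [h4, hLC4, hepos]
    have h6 : ↑j*η/4 ≤ Real.log (25*u) :=
      (Real.le_log_iff_exp_le (by nlinarith only [hu1] : (0:ℝ) < 25*u)).mpr h2
    have h7 : η*(↑j:ℝ) = ↑j*η := mul_comm _ _
    linarith only [h6, h7]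
  -- helper: lower bounds on log (dd j) and dd j
  have hI1gen : ∀ j : ℕ, j < istar → 0 < ℓ j → 0 < dd j →
      dd j / ℓ j ≤ L / C * Real.exp (-(↑j * η / 4)) →
      u - (4+2*ε/5) * (L / C - dd j / ℓ j) - η * ↑j ≤ Real.log (dd j) →
      (u - (4+2*ε/5) * (L/C) - 4*Real.log (25*u) ≤ Real.log (dd j)) ∧
      ε/40 * u ≤ Real.log (dd j) ∧ d ^ (ε/40) ≤ dd j := by
    intro j hj hlj hdj hr hlog
    have hηj := hEta j hj hlj hr
    have hrpos : 0 ≤ dd j / ℓ j := le_of_lt (div_pos hdj hlj)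
    have hKc : (0:ℝ) < 4+2*ε/5 := by linarith only [hε]
    have h1 : u - (4+2*ε/5) * (L/C) - 4*Real.log (25*u) ≤ Real.log (dd j) := by
      nlinarith only [hlog, hηj, hrpos, hKc]
    have h2 : ε/40 * u ≤ Real.log (dd j) := by
      apply i1_mid γ ε u L (Real.log (dd j)) hγ0 hγ1 hε hεγ hu1 hLu hc4
      rw [← hCdef]
      exact h1
    refine ⟨h1, h2, ?_⟩
    have h9 : d ^ (ε/40) = Real.exp (Real.log d * (ε/40)) := Real.rpow_def_of_pos hd0 _
    rw [h9, ← hu]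
    calc Real.exp (u * (ε/40)) ≤ Real.exp (Real.log (dd j)) := by
          apply Real.exp_le_exp.mpr
          nlinarith only [h2]
    _ = dd j := Real.exp_log hdj
  -- the main induction
  have main : ∀ i : ℕ, i < istar →
      (0 < ℓ i ∧ 0 < dd i ∧ dd i ≤ d) ∧
      dd i / ℓ i ≤ L / C * Real.exp (-(↑i * η / 4)) ∧
      (u - (4+2*ε/5) * (L / C - dd i / ℓ i) - η * ↑i ≤ Real.log (dd i)) ∧
      β i ≤ (1 + 36*η)^i * d ^ (e * (ε/40)) := by
    intro i
    induction i with
    | zero =>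
      intro _
      have hl0pos : 0 < ℓ 0 := by rw [hl0]; positivity
      refine ⟨⟨hl0pos, by rw [hdd0]; exact hd0, le_of_eq hdd0⟩, ?_, ?_, ?_⟩
      · rw [hr0eq]
        simp
      · rw [hr0eq, hdd0, ← hu]
        push_cast
        simp
      · rw [hb0, pow_zero, one_mul]
        apply Real.rpow_le_rpow_of_exponent_le hd1.le
        nlinarith only [he_neg, hε8, hε]
    | succ i ih =>
      intro hsucc
      have hi : i < istar := Nat.lt_of_succ_lt hsucc
      obtain ⟨⟨hlp, hdp, hdled⟩, hrle, hlogge, hbeta⟩ := ih hi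
      obtain ⟨hQ1, hlog40, hI1i⟩ := hI1gen i hi hlp hdp hrle hlogge
      have hstepl' := hstepl i
      have hstepd' := hstepd i
      have hstepb' := hstepb i
      set Kv := (1 - η/ℓ i) ^ (2 * dd i) with hKvd
      set Uv := (1 - η/ℓ i) ^ (Kv * ℓ i / 2) with hUvd
      have hdd16 : (16384:ℝ) ≤ dd i := le_trans hD016384 hI1i
      have hri_pos : 0 < dd i / ℓ i := div_pos hdp hlp
      have hexpneg : Real.exp (-(↑i * η / 4)) ≤ 1 := by
        apply Real.exp_le_one_iff.mpr
        have : (0:ℝ) ≤ ↑i * η := mul_nonneg (Nat.cast_nonneg i) hη0.le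
        linarith only [this]
      have hri_ub : dd i / ℓ i ≤ L / C := by
        calc dd i / ℓ i ≤ L/C * Real.exp (-(↑i * η / 4)) := hrle
        _ ≤ L/C * 1 := mul_le_mul_of_nonneg_left hexpneg (by positivity)
        _ = L/C := mul_one _
      have hηr : η * (dd i / ℓ i) ≤ ε/64 := by
        calc η * (dd i / ℓ i) ≤ η * (L/C) := mul_le_mul_of_nonneg_left hri_ub hη0.le
        _ = μ/C := hηLC
        _ ≤ ε/64 := hμC
      obtain ⟨hKv_pos, hKv_le1, hUv_pos, hUv_le1, hUv_q, hlogsum⟩ :=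
        step_core ε η (ℓ i) (dd i) Kv Uv hKvd hUvd hε hε8 hη0 hηub hlp hdd16 hηr
      have hl'pos : 0 < ℓ (i+1) := by rw [hstepl']; exact mul_pos hKv_pos hlp
      have hd'pos : 0 < dd (i+1) := by
        rw [hstepd']; exact mul_pos (mul_pos hKv_pos hUv_pos) hdp
      have hd'le : dd (i+1) ≤ d := by
        rw [hstepd']
        have hKU : Kv * Uv ≤ 1 := mul_le_one₀ hKv_le1 hUv_pos.le hUv_le1
        calc Kv * Uv * dd i ≤ 1 * dd i := mul_le_mul_of_nonneg_right hKU hdp.le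
        _ = dd i := one_mul _
        _ ≤ d := hdled
      have hr'eq : dd (i+1) / ℓ (i+1) = Uv * (dd i / ℓ i) := by
        rw [hstepd', hstepl']
        field_simp
      have hr'le : dd (i+1) / ℓ (i+1) ≤ L / C * Real.exp (-(↑(i+1) * η / 4)) := by
        rw [hr'eq]
        have hcomb : Real.exp (-(η/4)) * (L/C * Real.exp (-(↑i * η / 4)))
            = L/C * Real.exp (-(↑(i+1) * η / 4)) := by
          rw [← mul_assoc, mul_comm (Real.exp (-(η/4))) (L/C), mul_assoc, ← Real.exp_add]
          congr 1
          push_cast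
          ring
        calc Uv * (dd i / ℓ i) ≤ Real.exp (-(η/4)) * (L/C * Real.exp (-(↑i * η / 4))) :=
          mul_le_mul hUv_q hrle hri_pos.le (Real.exp_pos _).le
        _ = _ := hcomb
      have hlogdd' : Real.log (dd (i+1)) = Real.log Kv + Real.log Uv + Real.log (dd i) := by
        rw [hstepd', Real.log_mul (ne_of_gt (mul_pos hKv_pos hUv_pos)) (ne_of_gt hdp),
          Real.log_mul (ne_of_gt hKv_pos) (ne_of_gt hUv_pos)]
      have hlog' : u - (4+2*ε/5) * (L / C - dd (i+1) / ℓ (i+1)) - η * ↑(i+1)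
          ≤ Real.log (dd (i+1)) := by
        rw [hlogdd', hr'eq]
        push_cast
        have hcast : η * ((↑i:ℝ) + 1) = η * ↑i + η := by ring
        linarith only [hlogge, hlogsum, hcast]
      obtain ⟨_, _, hI1succ⟩ := hI1gen (i+1) hsucc hl'pos hd'pos hr'le hlog'
      have hβ' : β (i+1) ≤ (1+36*η)^(i+1) * d ^ (e * (ε/40)) := by
        rw [hstepb']
        apply max_le
        · calc (1+36*η) * β i ≤ (1+36*η) * ((1+36*η)^i * d ^ (e*(ε/40))) :=
            mul_le_mul_of_nonneg_left hbeta (by linarith only [hη0])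
          _ = (1+36*η)^(i+1) * d ^ (e*(ε/40)) := by rw [pow_succ]; ring
        · have h17 : dd (i+1) ^ e ≤ (d ^ (ε/40)) ^ e :=
            Real.rpow_le_rpow_of_nonpos (by positivity) hI1succ he_neg.le
          have h18 : (d ^ (ε/40)) ^ e = d ^ (e * (ε/40)) := by
            rw [← Real.rpow_mul hd0.le, mul_comm]
          have h19 : (1:ℝ) ≤ (1+36*η)^(i+1) := one_le_pow₀ (by linarith only [hη0])
          calc dd (i+1) ^ e ≤ d ^ (e*(ε/40)) := by rw [← h18]; exact h17
          _ ≤ (1+36*η)^(i+1) * d ^ (e*(ε/40)) :=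
            le_mul_of_one_le_left (by positivity) h19
      exact ⟨⟨hl'pos, hd'pos, hd'le⟩, hr'le, hlog', hβ'⟩
  intro i hi
  obtain ⟨⟨hlp, hdp, hdled⟩, hrle, hlogge, hbeta⟩ := main i hi
  obtain ⟨hQ1, hlog40, hI1i⟩ := hI1gen i hi hlp hdp hrle hlogge
  have hηi := hEta i hi hlp hrle
  have hdd16 : (16384:ℝ) ≤ dd i := le_trans hD016384 hI1i
  have hdd1 : (1:ℝ) < dd i := by linarith only [hdd16]
  have hexpneg : Real.exp (-(↑i * η / 4)) ≤ 1 := by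
    apply Real.exp_le_one_iff.mpr
    have h0 : (0:ℝ) ≤ ↑i * η := mul_nonneg (Nat.cast_nonneg i) hη0.le
    linarith only [h0]
  have hri_ub : dd i / ℓ i ≤ L / C := by
    calc dd i / ℓ i ≤ L/C * Real.exp (-(↑i * η / 4)) := hrle
    _ ≤ L/C * 1 := mul_le_mul_of_nonneg_left hexpneg (by positivity)
    _ = L/C := mul_one _
  have hηr : η * (dd i / ℓ i) ≤ ε/64 := by
    calc η * (dd i / ℓ i) ≤ η * (L/C) := mul_le_mul_of_nonneg_left hri_ub hη0.le
    _ = μ/C := hηLC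
    _ ≤ ε/64 := hμC
  -- (I2)
  have hI2 : k ≤ dd i ^ (2 * γ') := by
    have hlogk : Real.log k = 2*(u - L) := by
      have h1 := Real.log_sqrt hk0.le
      linarith only [h1, hLsplit]
    have hkey := keyalg γ ε u L hγ0 hγ1 hε hεle (by linarith only [hu1]) hLlb hLu
    have hkey2 : (u - L) + ε/80*u ≤ γ' * (u - (4+2*ε/5)*(L/C)) := by
      rw [hγ'def, hCdef]
      exact hkey
    have hlog25 : 0 ≤ Real.log (25*u) := Real.log_nonneg (by linarith only [hu1])
    have h21 : γ' * (4*Real.log (25*u)) ≤ ε/80*u := by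
      calc γ' * (4*Real.log (25*u)) ≤ 1 * (4*Real.log (25*u)) :=
        mul_le_mul_of_nonneg_right hγ'1.le (by linarith only [hlog25])
      _ ≤ ε/80*u := by linarith only [hc5]
    have h20 : Real.log k ≤ 2*γ' * Real.log (dd i) := by
      have h22 : γ' * (u - (4+2*ε/5)*(L/C) - 4*Real.log (25*u))
          = γ' * (u - (4+2*ε/5)*(L/C)) - γ' * (4*Real.log (25*u)) := by ring
      have h23 : γ' * (u - (4+2*ε/5)*(L/C) - 4*Real.log (25*u)) ≤ γ' * Real.log (dd i) :=
        mul_le_mul_of_nonneg_left hQ1 hγ'0.le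
      linarith only [hkey2, h21, h22, h23, hlogk]
    calc k = Real.exp (Real.log k) := (Real.exp_log hk0).symm
    _ ≤ Real.exp (2*γ' * Real.log (dd i)) := Real.exp_le_exp.mpr h20
    _ = dd i ^ (2*γ') := by
        rw [Real.rpow_def_of_pos (by linarith only [hdd1] : (0:ℝ) < dd i)]
        ring_nf
  refine ⟨hI1i, hI2, ⟨?_, ?_⟩, ⟨?_, ?_⟩, ?_⟩
  · -- 4 η dd i < ℓ i
    have h24 : 4*(η*(dd i/ℓ i)) < 1 := by linarith only [hηr, hε8]
    have h25 : 4*η*dd i = 4*(η*(dd i/ℓ i))*ℓ i := by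
      field_simp
    calc 4*η*dd i = 4*(η*(dd i/ℓ i))*ℓ i := h25
    _ < 1 * ℓ i := mul_lt_mul_of_pos_right h24 hlp
    _ = ℓ i := one_mul _
  · -- ℓ i < 100 dd i
    have h100 : ℓ i / 100 < dd i := not_le.mp (hmin i hi)
    linarith only [h100]
  · -- 1/log^5 < η
    apply i4_low ε u (Real.log (dd i)) η hε hε8 hu1 hc6 hlog40
    rw [hηdef]
    exact div_le_div₀ hμ0.le hμlb hLpos hLu
  · -- η < 1 / log (dd i / sqrt k)
    have h32 : Real.sqrt k ≤ dd i ^ γ' := by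
      rw [Real.sqrt_eq_rpow]
      calc k ^ (1/2:ℝ) ≤ (dd i ^ (2*γ')) ^ (1/2:ℝ) :=
        Real.rpow_le_rpow hk0.le hI2 (by norm_num)
      _ = dd i ^ γ' := by rw [← Real.rpow_mul (by linarith only [hdd1])]; congr 1; ring
    have h34 : dd i ^ γ' < dd i := by
      calc dd i ^ γ' < dd i ^ (1:ℝ) := Real.rpow_lt_rpow_of_exponent_lt hdd1 hγ'1
      _ = dd i := Real.rpow_one _
    have h33 : 1 < dd i / Real.sqrt k := by
      rw [lt_div_iff₀ hsk0, one_mul]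
      linarith only [h32, h34]
    have hbpos : 0 < Real.log (dd i / Real.sqrt k) := Real.log_pos h33
    have hble : Real.log (dd i / Real.sqrt k) ≤ L := by
      rw [hL]
      apply Real.log_le_log (by positivity)
      exact div_le_div_of_nonneg_right hdled hsk0.le
    have h35 : η * Real.log (dd i / Real.sqrt k) < 1 := by
      calc η * Real.log (dd i / Real.sqrt k) ≤ η * L :=
        mul_le_mul_of_nonneg_left hble hη0.le
      _ = μ := hηL
      _ < 1 := hμ1
    rw [lt_div_iff₀ hbpos]
    exact h35
  · -- β ≤ 1/10
    apply i5_final i η u (7*γ*(1-γ)/6400 * (ε/40)) (e*(ε/40)) (β i) hη0.le hu1 c2pos hηi ?_ hc7 ?_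
    · have := mul_le_mul_of_nonneg_right he_ub (show (0:ℝ) ≤ ε/40 by positivity)
      linarith only [this]
    · have hdr : d ^ (e*(ε/40)) = Real.exp ((e*(ε/40))*u) := by
        rw [Real.rpow_def_of_pos hd0, ← hu, mul_comm]
      rw [← hdr]
      exact hbeta
end
end
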